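/- arXiv:2504.05695 — 2 statements merged into one kernel-verified Lean document; each statement's English description precedes it below -/
import Mathlib

section
/- Let f: ℝ^{M₀} → ℝ^Q be Lipschitz with constant c₀. For any finite sets S_train = {(x_i, y_i)}_{i=1}^n and S_test = {(x̃_j, ỹ_j)}_{j=1}^m in ℝ^{M₀} × ℝ^Q, the difference of average squared errors satisfies |(1/n)Σ_i |f(x_i) − y_i|² − (1/m)Σ_j |f(x̃_j) − ỹ_j|²| ≤ C₀ (1 + R) · diam(S_train ∪ S_test), where R is the radius of the smallest ball centered at the origin containing S_train ∪ S_test, diam denotes the diameter (with respect to the Euclidean metric on ℝ^{M₀} × ℝ^Q), and C₀ = 8(1 + |f(0)| + c₀)². -/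
set_option maxHeartbeats 1000000

lemma norm_pair_le {E F : Type*} [NormedAddCommGroup E] [NormedAddCommGroup F]
    (u : E) (v : F) (r : ℝ) (h : Real.sqrt (‖u‖ ^ 2 + ‖v‖ ^ 2) ≤ r) :
    ‖u‖ ≤ r ∧ ‖v‖ ≤ r := by
  constructor
  · calc ‖u‖ = Real.sqrt (‖u‖ ^ 2) := (Real.sqrt_sq (norm_nonneg _)).symm
      _ ≤ Real.sqrt (‖u‖ ^ 2 + ‖v‖ ^ 2) := Real.sqrt_le_sqrt (by nlinarith [sq_nonneg ‖u‖, sq_nonneg ‖v‖])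
      _ ≤ r := h
  · calc ‖v‖ = Real.sqrt (‖v‖ ^ 2) := (Real.sqrt_sq (norm_nonneg _)).symm
      _ ≤ Real.sqrt (‖u‖ ^ 2 + ‖v‖ ^ 2) := Real.sqrt_le_sqrt (by nlinarith [sq_nonneg ‖u‖, sq_nonneg ‖v‖])
      _ ≤ r := h

/-- A priori bound on the loss discrepancy between training and test sets for a
Lipschitz predictor. `R` bounds the norms of all data points (as points of
ℝ^{M₀} × ℝ^Q with the Euclidean product norm), and `D` bounds all pairwise
distances in `S_train ∪ S_test`. -/
theorem loss_discrepancy_apriori_bound {M₀ Q n m : ℕ} (hn : 0 < n) (hm : 0 < m)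
    (f : EuclideanSpace ℝ (Fin M₀) → EuclideanSpace ℝ (Fin Q))
    (c₀ : ℝ) (hc₀ : 0 ≤ c₀)
    (hf : ∀ x y, ‖f x - f y‖ ≤ c₀ * ‖x - y‖)
    (x : Fin n → EuclideanSpace ℝ (Fin M₀)) (y : Fin n → EuclideanSpace ℝ (Fin Q))
    (x' : Fin m → EuclideanSpace ℝ (Fin M₀)) (y' : Fin m → EuclideanSpace ℝ (Fin Q))
    (R D : ℝ)
    (hRtrain : ∀ i, Real.sqrt (‖x i‖ ^ 2 + ‖y i‖ ^ 2) ≤ R)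
    (hRtest : ∀ j, Real.sqrt (‖x' j‖ ^ 2 + ‖y' j‖ ^ 2) ≤ R)
    (hD : ∀ p q : EuclideanSpace ℝ (Fin M₀) × EuclideanSpace ℝ (Fin Q),
      (p ∈ Set.range (fun i => (x i, y i)) ∪ Set.range (fun j => (x' j, y' j))) →
      (q ∈ Set.range (fun i => (x i, y i)) ∪ Set.range (fun j => (x' j, y' j))) →
      Real.sqrt (‖p.1 - q.1‖ ^ 2 + ‖p.2 - q.2‖ ^ 2) ≤ D) :
    |((1 : ℝ) / n) * ∑ i, ‖f (x i) - y i‖ ^ 2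
        - ((1 : ℝ) / m) * ∑ j, ‖f (x' j) - y' j‖ ^ 2|
      ≤ 8 * (1 + ‖f 0‖ + c₀) ^ 2 * (1 + R) * D := by
  have i0 : Fin n := ⟨0, hn⟩
  have hR0 : 0 ≤ R := (Real.sqrt_nonneg _).trans (hRtrain i0)
  have hD0 : 0 ≤ D := (Real.sqrt_nonneg _).trans
    (hD (x i0, y i0) (x i0, y i0) (Or.inl ⟨i0, rfl⟩) (Or.inl ⟨i0, rfl⟩))
  have hf0 : 0 ≤ ‖f 0‖ := norm_nonneg _
  set K : ℝ := 1 + ‖f 0‖ + c₀ with hKdef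
  have hK1 : 1 ≤ K := by simp only [hKdef]; linarith
  set B : ℝ := 8 * K ^ 2 * (1 + R) * D with hBdef
  have key : ∀ i j, |‖f (x i) - y i‖ ^ 2 - ‖f (x' j) - y' j‖ ^ 2| ≤ B := by
    intro i j
    obtain ⟨hxR, hyR⟩ := norm_pair_le _ _ _ (hRtrain i)
    obtain ⟨hxR', hyR'⟩ := norm_pair_le _ _ _ (hRtest j)
    obtain ⟨hxD, hyD⟩ := norm_pair_le (x i - x' j) (y i - y' j) D
      (hD (x i, y i) (x' j, y' j) (Or.inl ⟨i, rfl⟩) (Or.inr ⟨j, rfl⟩))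
    set a := ‖f (x i) - y i‖ with ha_def
    set b := ‖f (x' j) - y' j‖ with hb_def
    have ha0 : 0 ≤ a := norm_nonneg _
    have hb0 : 0 ≤ b := norm_nonneg _
    have ha : a ≤ K * (1 + R) := by
      have h1 : a ≤ ‖f (x i) - f 0‖ + ‖f 0 - y i‖ :=
        norm_sub_le_norm_sub_add_norm_sub _ _ _
      have h2 : ‖f 0 - y i‖ ≤ ‖f 0‖ + ‖y i‖ := norm_sub_le _ _
      have h3 := hf (x i) 0
      have h4 : c₀ * ‖x i - 0‖ = c₀ * ‖x i‖ := by rw [sub_zero]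
      nlinarith [mul_le_mul_of_nonneg_left hxR hc₀]
    have hb : b ≤ K * (1 + R) := by
      have h1 : b ≤ ‖f (x' j) - f 0‖ + ‖f 0 - y' j‖ :=
        norm_sub_le_norm_sub_add_norm_sub _ _ _
      have h2 : ‖f 0 - y' j‖ ≤ ‖f 0‖ + ‖y' j‖ := norm_sub_le _ _
      have h3 := hf (x' j) 0
      have h4 : c₀ * ‖x' j - 0‖ = c₀ * ‖x' j‖ := by rw [sub_zero]
      nlinarith [mul_le_mul_of_nonneg_left hxR' hc₀]
    have hab : |a - b| ≤ K * D := by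
      have h1 : |a - b| ≤ ‖(f (x i) - y i) - (f (x' j) - y' j)‖ :=
        abs_norm_sub_norm_le _ _
      have h2 : (f (x i) - y i) - (f (x' j) - y' j)
          = (f (x i) - f (x' j)) - (y i - y' j) := by abel
      have h3 : ‖(f (x i) - f (x' j)) - (y i - y' j)‖
          ≤ ‖f (x i) - f (x' j)‖ + ‖y i - y' j‖ := norm_sub_le _ _
      have h4 := hf (x i) (x' j)
      rw [h2] at h1
      nlinarith [mul_le_mul_of_nonneg_left hxD hc₀]
    have habs : |a ^ 2 - b ^ 2| = (a + b) * |a - b| := by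
      rw [show a ^ 2 - b ^ 2 = (a + b) * (a - b) by ring, abs_mul,
        abs_of_nonneg (by linarith)]
    have hKR : 0 ≤ 2 * K * (1 + R) := by nlinarith
    calc |a ^ 2 - b ^ 2| = (a + b) * |a - b| := habs
      _ ≤ (2 * K * (1 + R)) * (K * D) :=
          mul_le_mul (by linarith) hab (abs_nonneg _) hKR
      _ ≤ B := by
          have hpos : 0 ≤ K ^ 2 * (1 + R) * D := by positivity
          simp only [hBdef]; nlinarith
  have hn' : (0:ℝ) < n := by exact_mod_cast hn
  have hm' : (0:ℝ) < m := by exact_mod_cast hm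
  have hsum : ((1 : ℝ) / n) * ∑ i, ‖f (x i) - y i‖ ^ 2
      - ((1 : ℝ) / m) * ∑ j, ‖f (x' j) - y' j‖ ^ 2
      = (1 / ((n : ℝ) * m)) * ∑ i, ∑ j, (‖f (x i) - y i‖ ^ 2 - ‖f (x' j) - y' j‖ ^ 2) := by
    have h1 : ∑ i, ∑ j, (‖f (x i) - y i‖ ^ 2 - ‖f (x' j) - y' j‖ ^ 2)
        = (m : ℝ) * ∑ i, ‖f (x i) - y i‖ ^ 2 - (n : ℝ) * ∑ j, ‖f (x' j) - y' j‖ ^ 2 := by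
      simp [Finset.sum_sub_distrib, Finset.mul_sum]
    rw [h1]
    field_simp
  rw [hsum]
  have hS : |∑ i, ∑ j, (‖f (x i) - y i‖ ^ 2 - ‖f (x' j) - y' j‖ ^ 2)|
      ≤ (n : ℝ) * m * B := by
    calc |∑ i, ∑ j, (‖f (x i) - y i‖ ^ 2 - ‖f (x' j) - y' j‖ ^ 2)|
        ≤ ∑ i, |∑ j, (‖f (x i) - y i‖ ^ 2 - ‖f (x' j) - y' j‖ ^ 2)| :=
          Finset.abs_sum_le_sum_abs _ _
      _ ≤ ∑ i : Fin n, ∑ j, |‖f (x i) - y i‖ ^ 2 - ‖f (x' j) - y' j‖ ^ 2| :=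
          Finset.sum_le_sum (fun i _ => Finset.abs_sum_le_sum_abs _ _)
      _ ≤ ∑ _i : Fin n, ∑ _j : Fin m, B :=
          Finset.sum_le_sum (fun i _ => Finset.sum_le_sum (fun j _ => key i j))
      _ = (n : ℝ) * m * B := by simp [Finset.sum_const]; ring
  calc |(1 / ((n : ℝ) * m)) * ∑ i, ∑ j, (‖f (x i) - y i‖ ^ 2 - ‖f (x' j) - y' j‖ ^ 2)|
      = (1 / ((n : ℝ) * m)) * |∑ i, ∑ j, (‖f (x i) - y i‖ ^ 2 - ‖f (x' j) - y' j‖ ^ 2)| := by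
        rw [abs_mul, abs_of_nonneg (by positivity)]
    _ ≤ (1 / ((n : ℝ) * m)) * ((n : ℝ) * m * B) := by
        apply mul_le_mul_of_nonneg_left hS (by positivity)
    _ = B := by field_simp
end

section
/- Consider a deep ReLU network with layer widths M₀ ≥ M₁ ≥ ⋯ ≥ M_L ≥ Q and training data (X₀, Y) with X₀ ∈ ℝ^{M₀×n} of full column rank n ≤ M₀, Y ∈ ℝ^{Q×n}. Define α = max_{i,j}|min(Y_{ij},0)|, b*_{L+1} = −α(1,…,1)ᵀ, b*_ℓ = 0 for ℓ ≤ L, W*_{L+1} = [I_Q 0], W*_ℓ = [I_{M_ℓ} 0] for 2 ≤ ℓ ≤ L, and W*_1 = [(Y − B*_{L+1})X₀⁺ ; 0] (the matrix (Y−B*_{L+1})(X₀ᵀX₀)⁻¹X₀ᵀ stacked on top of zeros so as to lie in ℝ^{M₁×M₀}). Then for every training column x_i with label y_i, the network output equals y_i exactly; i.e., the training loss (1/n)Σ_i |f_θ*(x_i) − y_i|² is zero. -/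
/-- The truncated identity matrix `[I 0]` (or `[I; 0]`): entry 1 iff row and column
indices agree. -/
def trunc (p q : ℕ) : Matrix (Fin p) (Fin q) ℝ :=
  Matrix.of fun i j => if (i : ℕ) = (j : ℕ) then 1 else 0

/-- Entrywise ReLU on a Euclidean vector. -/
noncomputable def relu {k : ℕ} (v : EuclideanSpace ℝ (Fin k)) : EuclideanSpace ℝ (Fin k) :=
  WithLp.toLp 2 fun i => max (v i) 0

/-- `α = max_{i,j} |min(Y_{ij}, 0)|`, the modulus of the most negative entry of `Y`. -/
noncomputable def alphaOf {Q n : ℕ} (hQ : 0 < Q) (hn : 0 < n)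
    (Y : Matrix (Fin Q) (Fin n) ℝ) : ℝ :=
  Finset.univ.sup' ⟨(⟨0, hQ⟩, ⟨0, hn⟩), Finset.mem_univ _⟩ fun p => |min (Y p.1 p.2) 0|

/-- First-layer weight `W*_1 = [(Y − B*_{L+1}) X₀⁺ ; 0] ∈ ℝ^{M₁×M₀}`:
the matrix `(Y − B)(X₀ᵀX₀)⁻¹X₀ᵀ` stacked on top of zeros. -/
noncomputable def W1 {Q n M₀ : ℕ} (M₁ : ℕ) (hQ : 0 < Q) (hn : 0 < n)
    (X₀ : Matrix (Fin M₀) (Fin n) ℝ) (Y : Matrix (Fin Q) (Fin n) ℝ) :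
    Matrix (Fin M₁) (Fin M₀) ℝ :=
  Matrix.of fun i j =>
    if h : (i : ℕ) < Q then
      ((Matrix.of fun a b => Y a b + alphaOf hQ hn Y) *
        ((X₀.transpose * X₀)⁻¹ * X₀.transpose)) ⟨i, h⟩ j
    else 0

/-- The hidden layers `2,…,L` of the constructed network, acting on the first hidden
layer: `netHid M k z` is `x^{(k+1)}` given `x^{(1)} = z`, with truncated-identity
weights and zero biases. -/
noncomputable def netHid (M : ℕ → ℕ) :
    ∀ k : ℕ, EuclideanSpace ℝ (Fin (M 1)) → EuclideanSpace ℝ (Fin (M (k + 1)))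
  | 0 => fun z => z
  | (k + 1) => fun z =>
      relu (Matrix.toEuclideanLin (trunc (M (k + 2)) (M (k + 1))) (netHid M k z))

/-- The constructed zero-loss network with `L = L' + 1` hidden layers:
`f(x) = W*_{L+1} x^{(L)} + b*_{L+1}` with `x^{(1)} = ReLU(W*_1 x)`. -/
noncomputable def netF {Q n : ℕ} (L' : ℕ) (M : ℕ → ℕ) (hQ : 0 < Q) (hn : 0 < n)
    (X₀ : Matrix (Fin (M 0)) (Fin n) ℝ) (Y : Matrix (Fin Q) (Fin n) ℝ)
    (x : EuclideanSpace ℝ (Fin (M 0))) : EuclideanSpace ℝ (Fin Q) :=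
  Matrix.toEuclideanLin (trunc Q (M (L' + 1)))
      (netHid M L' (relu (Matrix.toEuclideanLin (W1 (M 1) hQ hn X₀ Y) x)))
    + (WithLp.equiv 2 (Fin Q → ℝ)).symm fun _ => -(alphaOf hQ hn Y)

lemma toEucl_apply {m n : ℕ} (A : Matrix (Fin m) (Fin n) ℝ)
    (v : EuclideanSpace ℝ (Fin n)) (i : Fin m) :
    Matrix.toEuclideanLin A v i = ∑ j, A i j * v j := rfl

lemma alphaOf_add_nonneg {Q n : ℕ} (hQ : 0 < Q) (hn : 0 < n)
    (Y : Matrix (Fin Q) (Fin n) ℝ) (q : Fin Q) (i : Fin n) :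
    0 ≤ Y q i + alphaOf hQ hn Y := by
  have h := Finset.le_sup' (fun p : Fin Q × Fin n => |min (Y p.1 p.2) 0|)
    (Finset.mem_univ (q, i))
  have h2 : -(Y q i) ≤ |min (Y q i) 0| := by
    rcases le_or_gt (Y q i) 0 with h' | h'
    · rw [min_eq_left h', abs_of_nonpos h']
    · simp [min_eq_right h'.le]; linarith
  unfold alphaOf
  linarith [h, h2]

/-- The explicitly constructed minimizer of the strongly overparametrized deep ReLU
network interpolates the training data exactly: the training loss is zero. -/
theorem relu_network_zero_loss {Q n : ℕ} (L' : ℕ) (M : ℕ → ℕ)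
    (hQ : 0 < Q) (hn : 0 < n)
    (hmono : ∀ ℓ ≤ L', M (ℓ + 1) ≤ M ℓ) (hQM : Q ≤ M (L' + 1)) (hnM : n ≤ M 0)
    (X₀ : Matrix (Fin (M 0)) (Fin n) ℝ) (hrank : X₀.rank = n)
    (Y : Matrix (Fin Q) (Fin n) ℝ) :
    (∀ i : Fin n,
        netF L' M hQ hn X₀ Y ((WithLp.equiv 2 (Fin (M 0) → ℝ)).symm fun r => X₀ r i)
          = (WithLp.equiv 2 (Fin Q → ℝ)).symm fun q => Y q i) ∧
      ((1 : ℝ) / n) * ∑ i : Fin n,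
          ‖netF L' M hQ hn X₀ Y ((WithLp.equiv 2 (Fin (M 0) → ℝ)).symm fun r => X₀ r i)
              - (WithLp.equiv 2 (Fin Q → ℝ)).symm fun q => Y q i‖ ^ 2
        = 0 := by
  set α := alphaOf hQ hn Y with hα
  -- widths are ≥ Q on the relevant range
  have hanti : ∀ b ≤ L' + 1, ∀ a ≤ b, M b ≤ M a := by
    intro b
    induction b with
    | zero => intro _ a ha; interval_cases a; exact le_rfl
    | succ b ih =>
      intro hb a ha
      rcases Nat.lt_or_ge a (b + 1) with h | h
      · exact le_trans (hmono b (by omega)) (ih (by omega) a (by omega))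
      · have : a = b + 1 := by omega
        subst this; exact le_rfl
  have hQle : ∀ ℓ ≤ L' + 1, Q ≤ M ℓ := fun ℓ hℓ =>
    le_trans hQM (hanti (L' + 1) le_rfl ℓ hℓ)
  -- invertibility of X₀ᵀ X₀
  have hrank' : (X₀.transpose * X₀).rank = n := by
    rw [Matrix.rank_transpose_mul_self, hrank]
  have hunit : IsUnit (X₀.transpose * X₀) := by
    rw [← Matrix.mulVec_surjective_iff_isUnit]
    have : LinearMap.range (X₀.transpose * X₀).mulVecLin = ⊤ := by
      apply Submodule.eq_top_of_finrank_eq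
      rw [← Matrix.rank, hrank']
      simp [Module.finrank_fintype_fun_eq_card]
    intro y
    have hy : y ∈ LinearMap.range (X₀.transpose * X₀).mulVecLin := by
      rw [this]; trivial
    obtain ⟨x, hx⟩ := hy
    exact ⟨x, hx⟩
  have hinv : (X₀.transpose * X₀)⁻¹ * (X₀.transpose * X₀) = 1 :=
    Matrix.nonsing_inv_mul _ ((Matrix.isUnit_iff_isUnit_det _).mp hunit)
  -- the key computation of the first layer on a training column
  have hfirst : ∀ i : Fin n, ∀ j : Fin (M 1),
      relu (Matrix.toEuclideanLin (W1 (M 1) hQ hn X₀ Y)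
        ((WithLp.equiv 2 (Fin (M 0) → ℝ)).symm fun r => X₀ r i)) j
        = if h : (j : ℕ) < Q then Y ⟨j, h⟩ i + α else 0 := by
    intro i j
    have hmul : (W1 (M 1) hQ hn X₀ Y).mulVec (fun r => X₀ r i) j
        = if h : (j : ℕ) < Q then Y ⟨j, h⟩ i + α else 0 := by
      by_cases h : (j : ℕ) < Q
      · have : (W1 (M 1) hQ hn X₀ Y).mulVec (fun r => X₀ r i) j
            = ((Matrix.of fun a b => Y a b + α) *
                ((X₀.transpose * X₀)⁻¹ * X₀.transpose) * X₀) ⟨(j : ℕ), h⟩ i := by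
          simp only [Matrix.mulVec, dotProduct, Matrix.mul_apply, W1, Matrix.of_apply,
            dif_pos h, ← hα]
        rw [this]
        have : (Matrix.of fun a b => Y a b + α) *
            ((X₀.transpose * X₀)⁻¹ * X₀.transpose) * X₀
            = (Matrix.of fun a b => Y a b + α) := by
          rw [Matrix.mul_assoc, Matrix.mul_assoc, hinv, Matrix.mul_one]
        rw [this, dif_pos h]; rfl
      · simp only [Matrix.mulVec, dotProduct, W1, Matrix.of_apply, dif_neg h,
          zero_mul, Finset.sum_const_zero]
    show max ((W1 (M 1) hQ hn X₀ Y).mulVec (fun r => X₀ r i) j) 0 = _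
    rw [hmul]
    split_ifs with h
    · exact max_eq_left (alphaOf_add_nonneg hQ hn Y ⟨j, h⟩ i)
    · exact max_self 0
  -- propagate through hidden layers
  have hhid : ∀ k ≤ L', ∀ i : Fin n, ∀ j : Fin (M (k + 1)),
      netHid M k (relu (Matrix.toEuclideanLin (W1 (M 1) hQ hn X₀ Y)
        ((WithLp.equiv 2 (Fin (M 0) → ℝ)).symm fun r => X₀ r i))) j
        = if h : (j : ℕ) < Q then Y ⟨j, h⟩ i + α else 0 := by
    intro k
    induction k with
    | zero => intro _ i j; exact hfirst i j
    | succ k ih =>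
      intro hk i j
      have hle : M (k + 2) ≤ M (k + 1) := hmono (k + 1) hk
      have hj : (j : ℕ) < M (k + 1) := lt_of_lt_of_le j.isLt hle
      have hsum : (Matrix.toEuclideanLin (trunc (M (k + 2)) (M (k + 1)))
          (netHid M k (relu (Matrix.toEuclideanLin (W1 (M 1) hQ hn X₀ Y)
            ((WithLp.equiv 2 (Fin (M 0) → ℝ)).symm fun r => X₀ r i))))) j
          = if h : (j : ℕ) < Q then Y ⟨j, h⟩ i + α else 0 := by
        rw [toEucl_apply]
        rw [Finset.sum_eq_single (⟨(j : ℕ), hj⟩ : Fin (M (k + 1)))]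
        · rw [ih (by omega) i ⟨(j : ℕ), hj⟩]
          simp [trunc]
        · intro b _ hb
          have : ((j : ℕ) : ℕ) ≠ (b : ℕ) := fun hc => hb (by ext; exact hc.symm)
          simp [trunc, this]
        · intro hmem; exact absurd (Finset.mem_univ _) hmem
      show max ((Matrix.toEuclideanLin (trunc (M (k + 2)) (M (k + 1)))
          (netHid M k (relu (Matrix.toEuclideanLin (W1 (M 1) hQ hn X₀ Y)
            ((WithLp.equiv 2 (Fin (M 0) → ℝ)).symm fun r => X₀ r i))))) j) 0 = _
      rw [hsum]
      split_ifs with h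
      · exact max_eq_left (alphaOf_add_nonneg hQ hn Y ⟨j, h⟩ i)
      · exact max_self 0
  have hmain : ∀ i : Fin n,
      netF L' M hQ hn X₀ Y ((WithLp.equiv 2 (Fin (M 0) → ℝ)).symm fun r => X₀ r i)
        = (WithLp.equiv 2 (Fin Q → ℝ)).symm fun q => Y q i := by
    intro i
    refine WithLp.ofLp_injective 2 (funext fun q => ?_)
    show (Matrix.toEuclideanLin (trunc Q (M (L' + 1))) _) q + (-α) = Y q i
    have hq : (q : ℕ) < M (L' + 1) := lt_of_lt_of_le q.isLt hQM
    have : (Matrix.toEuclideanLin (trunc Q (M (L' + 1)))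
        (netHid M L' (relu (Matrix.toEuclideanLin (W1 (M 1) hQ hn X₀ Y)
          ((WithLp.equiv 2 (Fin (M 0) → ℝ)).symm fun r => X₀ r i))))) q
        = Y q i + α := by
      rw [toEucl_apply]
      rw [Finset.sum_eq_single (⟨(q : ℕ), hq⟩ : Fin (M (L' + 1)))]
      · rw [hhid L' le_rfl i ⟨(q : ℕ), hq⟩]
        simp [trunc, q.isLt]
      · intro b _ hb
        have : ((q : ℕ) : ℕ) ≠ (b : ℕ) := fun hc => hb (by ext; exact hc.symm)
        simp [trunc, this]
      · intro hmem; exact absurd (Finset.mem_univ _) hmem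
    rw [this]; ring
  refine ⟨hmain, ?_⟩
  have : ∀ i : Fin n,
      ‖netF L' M hQ hn X₀ Y ((WithLp.equiv 2 (Fin (M 0) → ℝ)).symm fun r => X₀ r i)
        - (WithLp.equiv 2 (Fin Q → ℝ)).symm fun q => Y q i‖ ^ 2 = 0 := by
    intro i; rw [hmain i]; simp
  rw [Finset.sum_congr rfl fun i _ => this i]
  simp
end
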